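/- For all i ≥ 1, the norms of the four gaps of the finite-precision pipelined CG recurrences satisfy the coupled bounds ‖f_{i+1}‖ ≤ ‖f_i‖ + |α_i β_i|·‖g_{i−1}‖ + |α_i|·‖h_i‖ + ‖A δ^x_i + δ^r_i‖ + |α_i|·‖A δ^p_i − δ^s_i‖; ‖g_i‖ ≤ |β_i|·‖g_{i−1}‖ + ‖h_i‖ + ‖A δ^p_i − δ^s_i‖; ‖h_{i+1}‖ ≤ ‖h_i‖ + |α_i β_i|·‖j_{i−1}‖ + ‖A δ^u_i − δ^w_i‖ + |α_i|·‖A δ^q_i − δ^z_i‖; and ‖j_i‖ ≤ |β_i|·‖j_{i−1}‖ + ‖A δ^q_i − δ^z_i‖. -/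

import Mathlib

/-!
Each gap satisfies a one-step linear recurrence obtained by applying `A` to the recurrence of
its first vector and subtracting the recurrence of its second: the rounding errors enter only
through `A δ - δ'`, the exact parts cancel because `A` is linear, and `z_i = A m_i + …` makes
the gap `A m_i - A m_i` vanish in the recurrence for `j`. Substituting the recurrence of
`g_{i+1}` (resp. `j_{i+1}`) into that of `f_{i+2}` (resp. `h_{i+2}`) and taking norms with the
triangle inequality gives the coupled bounds.
-/

section GapRecurrences

variable {R M N : Type*} [Ring R] [AddCommGroup M] [Module R M] [AddCommGroup N] [Module R N]
  (A : M →ₗ[R] N)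

theorem LinearMap.residual_gap_update (b : N) (x p δx : M) (r s δr : N) (α : R) :
    b - A (x + α • p + δx) - (r - α • s + δr) = (b - A x - r) - α • (A p - s) - (A δx + δr) := by
  simp only [map_add, map_smul, smul_sub]
  abel

theorem LinearMap.gap_sub_smul_update (u q δu : M) (w z δw : N) (α : R) :
    A (u - α • q + δu) - (w - α • z + δw) = (A u - w) - α • (A q - z) + (A δu - δw) := by
  simp only [map_add, map_sub, map_smul, smul_sub]
  abel

theorem LinearMap.gap_add_smul_update (u p δp : M) (w s δs : N) (β : R) :
    A (u + β • p + δp) - (w + β • s + δs) = β • (A p - s) + (A u - w) + (A δp - δs) := by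
  simp only [map_add, map_smul, smul_sub]
  abel

end GapRecurrences

section NormBounds

variable {𝕜 E : Type*} [NormedField 𝕜] [SeminormedAddCommGroup E] [NormedSpace 𝕜 E]

theorem norm_smul_add_add_le (β : 𝕜) (g h d : E) :
    ‖β • g + h + d‖ ≤ ‖β‖ * ‖g‖ + ‖h‖ + ‖d‖ :=
  norm_add₃_le.trans_eq (by rw [norm_smul])

theorem norm_sub_smul_sub_le_of_norm_le {f g e : E} {G : ℝ} (α : 𝕜) (hg : ‖g‖ ≤ G) :
    ‖f - α • g - e‖ ≤ ‖f‖ + ‖α‖ * G + ‖e‖ := by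
  calc ‖f - α • g - e‖ ≤ ‖f - α • g‖ + ‖e‖ := norm_sub_le _ _
    _ ≤ ‖f‖ + ‖α • g‖ + ‖e‖ := by gcongr; exact norm_sub_le _ _
    _ ≤ ‖f‖ + ‖α‖ * G + ‖e‖ := by rw [norm_smul]; gcongr

theorem norm_sub_smul_add_le_of_norm_le {h j e : E} {J : ℝ} (α : 𝕜) (hj : ‖j‖ ≤ J) :
    ‖h - α • j + e‖ ≤ ‖h‖ + ‖α‖ * J + ‖e‖ := by
  calc ‖h - α • j + e‖ ≤ ‖h - α • j‖ + ‖e‖ := norm_add_le _ _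
    _ ≤ ‖h‖ + ‖α • j‖ + ‖e‖ := by gcongr; exact norm_sub_le _ _
    _ ≤ ‖h‖ + ‖α‖ * J + ‖e‖ := by rw [norm_smul]; gcongr

end NormBounds

/-- For all `i ≥ 1`, the norms of the four gaps of the finite-precision
pipelined CG recurrences satisfy the coupled bounds of the paper. -/
theorem pipecg_coupled_norm_bounds
    {E : Type*} [NormedAddCommGroup E] [NormedSpace ℝ E]
    (A : E →L[ℝ] E) (b : E)
    (x r p s w u z q m δx δr δw δu δp δs δz δq f g h j : ℕ → E) (α β : ℕ → ℝ)
    (hx : ∀ i, x (i + 1) = x i + α i • p i + δx i)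
    (hr : ∀ i, r (i + 1) = r i - α i • s i + δr i)
    (hw : ∀ i, w (i + 1) = w i - α i • z i + δw i)
    (hu : ∀ i, u (i + 1) = u i - α i • q i + δu i)
    (hp : ∀ i, p (i + 1) = u (i + 1) + β (i + 1) • p i + δp (i + 1))
    (hs : ∀ i, s (i + 1) = w (i + 1) + β (i + 1) • s i + δs (i + 1))
    (hz : ∀ i, z (i + 1) = A (m (i + 1)) + β (i + 1) • z i + δz (i + 1))
    (hq : ∀ i, q (i + 1) = m (i + 1) + β (i + 1) • q i + δq (i + 1))
    (hf : ∀ i, f i = (b - A (x i)) - r i)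
    (hg : ∀ i, g i = A (p i) - s i)
    (hh : ∀ i, h i = A (u i) - w i)
    (hj : ∀ i, j i = A (q i) - z i) :
    ∀ i,
      ‖f (i + 2)‖ ≤ ‖f (i + 1)‖ + |α (i + 1) * β (i + 1)| * ‖g i‖ +
          |α (i + 1)| * ‖h (i + 1)‖ + ‖A (δx (i + 1)) + δr (i + 1)‖ +
          |α (i + 1)| * ‖A (δp (i + 1)) - δs (i + 1)‖ ∧
      ‖g (i + 1)‖ ≤ |β (i + 1)| * ‖g i‖ + ‖h (i + 1)‖ +
          ‖A (δp (i + 1)) - δs (i + 1)‖ ∧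
      ‖h (i + 2)‖ ≤ ‖h (i + 1)‖ + |α (i + 1) * β (i + 1)| * ‖j i‖ +
          ‖A (δu (i + 1)) - δw (i + 1)‖ +
          |α (i + 1)| * ‖A (δq (i + 1)) - δz (i + 1)‖ ∧
      ‖j (i + 1)‖ ≤ |β (i + 1)| * ‖j i‖ + ‖A (δq (i + 1)) - δz (i + 1)‖ := by
  intro i
  have eg : g (i + 1) = β (i + 1) • g i + h (i + 1) + (A (δp (i + 1)) - δs (i + 1)) := by
    rw [hg, hp, hs, ← A.coe_coe, LinearMap.gap_add_smul_update, A.coe_coe, ← hg, ← hh]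
  have ej : j (i + 1) = β (i + 1) • j i + (A (δq (i + 1)) - δz (i + 1)) := by
    rw [hj, hq, hz, ← A.coe_coe, LinearMap.gap_add_smul_update, sub_self, add_zero, A.coe_coe,
      ← hj]
  have ef : f (i + 2) = f (i + 1) - α (i + 1) • g (i + 1) - (A (δx (i + 1)) + δr (i + 1)) := by
    rw [hf, hx, hr, ← A.coe_coe, LinearMap.residual_gap_update, A.coe_coe, ← hf, ← hg]
  have eh : h (i + 2) = h (i + 1) - α (i + 1) • j (i + 1) + (A (δu (i + 1)) - δw (i + 1)) := by
    rw [hh, hu, hw, ← A.coe_coe, LinearMap.gap_sub_smul_update, A.coe_coe, ← hh, ← hj]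
  have bg := eg ▸ norm_smul_add_add_le (β (i + 1)) (g i) (h (i + 1)) _
  have bj : ‖j (i + 1)‖ ≤ ‖β (i + 1)‖ * ‖j i‖ + ‖A (δq (i + 1)) - δz (i + 1)‖ :=
    ej ▸ (norm_add_le _ _).trans_eq (by rw [norm_smul])
  have bf := ef ▸ norm_sub_smul_sub_le_of_norm_le (f := f (i + 1)) (α (i + 1)) bg
  have bh := eh ▸ norm_sub_smul_add_le_of_norm_le (h := h (i + 1)) (α (i + 1)) bj
  simp only [Real.norm_eq_abs] at bg bj bf bh
  refine ⟨bf.trans_eq ?_, bg, bh.trans_eq ?_, bj⟩ <;> rw [abs_mul] <;> ring
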